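/- For real numbers l_1,...,l_K with order statistics l_{(1)} ≤ ... ≤ l_{(K)}, and any integer h with 1 ≤ h < K, the LogSumExp function satisfies l_{(K)} ≤ log(∑_{k=1}^K exp(l_k)) ≤ l_{(K)} + log h + exp(l_{(K-h)} - l_{(K)})·(K-h)/h. -/

import Mathlib

open Finset Real

/-!
The largest term alone gives the lower bound. For the upper bound, monotonicity bounds the `h`
largest exponentials by `exp l_{(K)}` and the remaining `K - h` by `exp l_{(K-h)}`; factoring out
`h · exp l_{(K)}` leaves `log (1 + x) ≤ x`.
-/

theorem Real.le_log_sum_exp {ι : Type*} {s : Finset ι} (f : ι → ℝ) {i : ι} (hi : i ∈ s) :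
    f i ≤ log (∑ j ∈ s, exp (f j)) := by
  have hpos : 0 < ∑ j ∈ s, exp (f j) := sum_pos (fun j _ => exp_pos _) ⟨i, hi⟩
  rw [le_log_iff_exp_le hpos]
  exact single_le_sum (f := fun j => exp (f j)) (fun j _ => (exp_pos _).le) hi

theorem Monotone.sum_fin_le {n : ℕ} {g : Fin n → ℝ} (hg : Monotone g) (i : Fin n) {b : ℝ}
    (hb : ∀ k, g k ≤ b) : ∑ k, g k ≤ (i + 1 : ℕ) * g i + (n - 1 - i : ℕ) * b := by
  rw [← sum_filter_add_sum_filter_not univ (· ≤ i)]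
  have hIic : univ.filter (· ≤ i) = Iic i := by ext; simp
  have hIoi : univ.filter (fun k => ¬ k ≤ i) = Ioi i := by ext; simp
  rw [hIic, hIoi, ← Fin.card_Iic i, ← Fin.card_Ioi i, ← nsmul_eq_mul, ← nsmul_eq_mul]
  gcongr
  · exact sum_le_card_nsmul _ _ _ fun k hk => hg (mem_Iic.mp hk)
  · exact sum_le_card_nsmul _ _ _ fun k _ => hb k

theorem Real.log_mul_exp_add_mul_exp_le {h c : ℝ} (hh : 0 < h) (hc : 0 ≤ c) (M a : ℝ) :
    log (h * exp M + c * exp a) ≤ M + log h + exp (a - M) * c / h := by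
  set x := exp (a - M) * c / h
  have hx : 0 ≤ x := by positivity
  have hfactor : h * exp M + c * exp a = h * exp M * (1 + x) := by
    simp only [x, exp_sub]
    field_simp
  rw [hfactor, log_mul (by positivity) (by positivity), log_mul hh.ne' (exp_pos _).ne', log_exp]
  linarith [log_le_sub_one_of_pos (by linarith : 0 < 1 + x)]

/-- LogSumExp bounds: for sorted values `m` (a rearrangement of `l`) and `1 ≤ h < K`,
`l_{(K)} ≤ log ∑ exp l_k ≤ l_{(K)} + log h + exp(l_{(K-h)} - l_{(K)})·(K-h)/h`. -/
theorem lse_bounds (K h : ℕ) (hh : 1 ≤ h) (hhK : h < K)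
    (l m : Fin K → ℝ) (σ : Equiv.Perm (Fin K)) (hperm : l = m ∘ σ)
    (hmono : Monotone m) :
    m ⟨K - 1, by omega⟩ ≤ Real.log (∑ k, Real.exp (l k)) ∧
    Real.log (∑ k, Real.exp (l k)) ≤
      m ⟨K - 1, by omega⟩ + Real.log h +
        Real.exp (m ⟨K - h - 1, by omega⟩ - m ⟨K - 1, by omega⟩) * (K - h) / h := by
  have hsum : ∑ k, exp (l k) = ∑ k, exp (m k) := by
    rw [hperm]
    exact Equiv.sum_comp σ (fun k => exp (m k))
  rw [hsum]
  refine ⟨le_log_sum_exp m (mem_univ _), ?_⟩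
  have htop : ∀ k, exp (m k) ≤ exp (m ⟨K - 1, by omega⟩) :=
    fun k => exp_le_exp.2 (hmono (Fin.mk_le_mk.2 (by omega)))
  have hsplit := (exp_monotone.comp hmono).sum_fin_le ⟨K - h - 1, by omega⟩ htop
  rw [show K - h - 1 + 1 = K - h by omega, show K - 1 - (K - h - 1) = h by omega,
    Nat.cast_sub hhK.le] at hsplit
  calc log (∑ k, exp (m k))
      ≤ log (h * exp (m ⟨K - 1, by omega⟩) + (K - h) * exp (m ⟨K - h - 1, by omega⟩)) := by
        gcongr
        · exact sum_pos (fun _ _ => exp_pos _) ⟨⟨0, by omega⟩, mem_univ _⟩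
        · exact hsplit.trans_eq (add_comm _ _)
    _ ≤ _ := log_mul_exp_add_mul_exp_le (by exact_mod_cast hh) (by simp [hhK.le]) _ _
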